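/- arXiv:2408.13911 — 2 statements merged into one kernel-verified Lean document; each statement's English description precedes it below -/
import Mathlib

section
/- Let L be a frame. Suppose r_1 < ⋯ < r_n and s_1 < ⋯ < s_m are rationals, a_1, …, a_n and b_1, …, b_m are pairwise disjoint complemented elements of L, all different from ⊥, with a_1 ⊔ ⋯ ⊔ a_n = ⊤ and b_1 ⊔ ⋯ ⊔ b_m = ⊤, and suppose Σ_{i=1}^{n} r_i·χ_{a_i} = Σ_{j=1}^{m} s_j·χ_{b_j} (componentwise equality of pairs). Then n = m, r_i = s_i for all i, and a_i = b_i for all i: the canonical form of a simple function is unique. -/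
/-- A pair of maps `u, v : ℚ → L`, encoding a real-valued function on the frame `L`
via `f(p,—) = u p`, `f(—,q) = v q`. -/
structure MP (L : Type*) where
  u : ℚ → L
  v : ℚ → L

namespace MP

variable {L : Type*} [Order.Frame L]

/-- The order on pairs: `f ≤ g` iff `u_f p ≤ u_g p` and `v_g q ≤ v_f q` for all rationals. -/
def le (f g : MP L) : Prop :=
  (∀ p : ℚ, f.u p ≤ g.u p) ∧ (∀ q : ℚ, g.v q ≤ f.v q)

/-- The sum of two pairs. -/
noncomputable def add (f g : MP L) : MP L where
  u := fun p => ⨆ t : ℚ, f.u t ⊓ g.u (p - t)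
  v := fun q => ⨆ t : ℚ, f.v t ⊓ g.v (q - t)

/-- The join of two pairs. -/
def sup (f g : MP L) : MP L where
  u := fun p => f.u p ⊔ g.u p
  v := fun q => f.v q ⊓ g.v q

/-- The negation of a pair. -/
def neg (f : MP L) : MP L where
  u := fun p => f.v (-p)
  v := fun q => f.u (-q)

end MP

/-- The zero pair `𝟎`. -/
noncomputable def zeroMP (L : Type*) [Order.Frame L] : MP L where
  u := fun p => if p < 0 then ⊤ else ⊥
  v := fun q => if q ≤ 0 then ⊥ else ⊤

/-- The scaled characteristic pair `r·χ_a`, for a rational `r` and a complemented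
element `a` with complement `ac`. -/
noncomputable def sChi {L : Type*} [Order.Frame L] (r : ℚ) (a ac : L) : MP L where
  u := fun p =>
    if 0 < r then (if p < 0 then ⊤ else if p < r then a else ⊥)
    else if r = 0 then (if p < 0 then ⊤ else ⊥)
    else (if p < r then ⊤ else if p < 0 then ac else ⊥)
  v := fun q =>
    if 0 < r then (if q ≤ 0 then ⊥ else if q ≤ r then ac else ⊤)
    else if r = 0 then (if q ≤ 0 then ⊥ else ⊤)
    else (if q ≤ r then ⊥ else if q ≤ 0 then a else ⊤)

/-- Iterated sum of a finite list of pairs. -/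
noncomputable def sumMP {L : Type*} [Order.Frame L] : List (MP L) → MP L
  | [] => zeroMP L
  | [f] => f
  | f :: g :: fs => f.add (sumMP (g :: fs))



section
variable {L : Type*} [Order.Frame L]

lemma chi_le {P : Prop} [Decidable P] {x : L} : (if P then x else ⊥) ≤ x := by
  split <;> simp

lemma fin_iSup_succ {n : ℕ} (f : Fin (n+1) → L) :
    ⨆ i, f i = f 0 ⊔ ⨆ i : Fin n, f i.succ := by
  apply le_antisymm
  · exact iSup_le (Fin.cases le_sup_left
      (fun i => le_sup_of_le_right (le_iSup (fun i : Fin n => f i.succ) i)))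
  · exact sup_le (le_iSup f 0) (iSup_le fun i => le_iSup f i.succ)

lemma fin_iInf_succ {n : ℕ} (f : Fin (n+1) → L) :
    ⨅ i, f i = f 0 ⊓ ⨅ i : Fin n, f i.succ := by
  apply le_antisymm
  · exact le_inf (iInf_le f 0) (le_iInf fun i => iInf_le f i.succ)
  · exact le_iInf (Fin.cases inf_le_left
      (fun i => inf_le_of_right_le (iInf_le (fun i : Fin n => f i.succ) i)))

lemma key_u (c d : L) (α β p : ℚ) :
    (⨆ t : ℚ, (if t < α then c else ⊥) ⊓ (if p - t < β then d else ⊥))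
      = if p < α + β then c ⊓ d else ⊥ := by
  by_cases h : p < α + β
  · rw [if_pos h]
    refine le_antisymm (iSup_le fun t => ?_) ?_
    · refine le_trans (inf_le_inf chi_le chi_le) le_rfl
    · obtain ⟨t, ht1, ht2⟩ := exists_between (show p - β < α by linarith)
      refine le_trans ?_ (le_iSup _ t)
      rw [if_pos ht2, if_pos (by linarith)]
  · rw [if_neg h]
    refine le_antisymm (iSup_le fun t => ?_) bot_le
    by_cases h1 : t < α
    · by_cases h2 : p - t < β
      · exact absurd (by linarith : p < α + β) h
      · simp [h2]
    · simp [h1]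

lemma key_v (c d : L) (α β q : ℚ) :
    (⨆ t : ℚ, (if α < t then c else ⊥) ⊓ (if β < q - t then d else ⊥))
      = if α + β < q then c ⊓ d else ⊥ := by
  by_cases h : α + β < q
  · rw [if_pos h]
    refine le_antisymm (iSup_le fun t => ?_) ?_
    · refine le_trans (inf_le_inf chi_le chi_le) le_rfl
    · obtain ⟨t, ht1, ht2⟩ := exists_between (show α < q - β by linarith)
      refine le_trans ?_ (le_iSup _ t)
      rw [if_pos ht1, if_pos (by linarith)]
  · rw [if_neg h]
    refine le_antisymm (iSup_le fun t => ?_) bot_le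
    by_cases h1 : α < t
    · by_cases h2 : β < q - t
      · exact absurd (by linarith : α + β < q) h
      · simp [h2]
    · simp [h1]

end
section
variable {L : Type*} [Order.Frame L]

lemma sChi_u (r : ℚ) (a ac : L) (h : a ⊔ ac = ⊤) (p : ℚ) :
    (sChi r a ac).u p = (if p < r then a else ⊥) ⊔ (if p < 0 then ac else ⊥) := by
  simp only [sChi]
  rcases lt_trichotomy r 0 with h0 | h0 | h0
  · rw [if_neg (by linarith), if_neg (by linarith)]
    split_ifs <;> first | (exfalso; linarith) | simp_all
  · subst h0
    rw [if_neg (by linarith), if_pos rfl]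
    split_ifs <;> first | (exfalso; linarith) | simp_all
  · rw [if_pos h0]
    split_ifs <;> first | (exfalso; linarith) | simp_all

lemma sChi_v (r : ℚ) (a ac : L) (h : a ⊔ ac = ⊤) (q : ℚ) :
    (sChi r a ac).v q = (if r < q then a else ⊥) ⊔ (if 0 < q then ac else ⊥) := by
  simp only [sChi]
  rcases lt_trichotomy r 0 with h0 | h0 | h0
  · rw [if_neg (by linarith), if_neg (by linarith)]
    split_ifs <;> first | (exfalso; linarith) | simp_all
  · subst h0
    rw [if_neg (by linarith), if_pos rfl]
    split_ifs <;> first | (exfalso; linarith) | simp_all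
  · rw [if_pos h0]
    split_ifs <;> first | (exfalso; linarith) | simp_all

lemma sumMP_cons (f : MP L) (l : List (MP L)) (h : l ≠ []) :
    sumMP (f :: l) = f.add (sumMP l) := by
  cases l with
  | nil => exact absurd rfl h
  | cons g fs => rfl

end
section
variable {L : Type*} [Order.Frame L]

lemma add_u_calc {k : ℕ} (r0 : ℚ) (a0 ac0 c : L) (rt : Fin k → ℚ) (at' : Fin k → L)
    (h1 : ∀ i, a0 ⊓ at' i = ⊥) (h2 : a0 ⊓ c = a0) (h3 : ∀ i, ac0 ⊓ at' i = at' i) (p : ℚ) :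
    (⨆ t : ℚ, ((if t < r0 then a0 else ⊥) ⊔ (if t < 0 then ac0 else ⊥)) ⊓
        ((⨆ i, if p - t < rt i then at' i else ⊥) ⊔ (if p - t < 0 then c else ⊥)))
    = ((if p < r0 then a0 else ⊥) ⊔ ⨆ i, if p < rt i then at' i else ⊥)
        ⊔ (if p < 0 then ac0 ⊓ c else ⊥) := by
  have P1 : (⨆ t : ℚ, (if t < r0 then a0 else ⊥) ⊓ ⨆ i, if p - t < rt i then at' i else ⊥)
      = ⊥ := by
    have e : ∀ t : ℚ, (if t < r0 then a0 else ⊥) ⊓ (⨆ i, if p - t < rt i then at' i else ⊥)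
        = ⨆ i, (if t < r0 then a0 else ⊥) ⊓ (if p - t < rt i then at' i else ⊥) :=
      fun t => inf_iSup_eq _ _
    rw [iSup_congr e, iSup_comm]
    have e2 : ∀ i, (⨆ t : ℚ, (if t < r0 then a0 else ⊥) ⊓ (if p - t < rt i then at' i else ⊥))
        = ⊥ := fun i => by rw [key_u]; simp [h1 i]
    rw [iSup_congr e2]
    simp
  have P2 : (⨆ t : ℚ, (if t < r0 then a0 else ⊥) ⊓ (if p - t < 0 then c else ⊥))
      = if p < r0 then a0 else ⊥ := by
    rw [key_u, add_zero, h2]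
  have P3 : (⨆ t : ℚ, (if t < 0 then ac0 else ⊥) ⊓ ⨆ i, if p - t < rt i then at' i else ⊥)
      = ⨆ i, if p < rt i then at' i else ⊥ := by
    have e : ∀ t : ℚ, (if t < 0 then ac0 else ⊥) ⊓ (⨆ i, if p - t < rt i then at' i else ⊥)
        = ⨆ i, (if t < 0 then ac0 else ⊥) ⊓ (if p - t < rt i then at' i else ⊥) :=
      fun t => inf_iSup_eq _ _
    rw [iSup_congr e, iSup_comm]
    refine iSup_congr fun i => ?_
    rw [key_u, zero_add, h3 i]
  have P4 : (⨆ t : ℚ, (if t < 0 then ac0 else ⊥) ⊓ (if p - t < 0 then c else ⊥))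
      = if p < 0 then ac0 ⊓ c else ⊥ := by
    rw [key_u, add_zero]
  calc
    (⨆ t : ℚ, ((if t < r0 then a0 else ⊥) ⊔ (if t < 0 then ac0 else ⊥)) ⊓
        ((⨆ i, if p - t < rt i then at' i else ⊥) ⊔ (if p - t < 0 then c else ⊥)))
      = ⨆ t : ℚ,
          (((if t < r0 then a0 else ⊥) ⊓ ⨆ i, if p - t < rt i then at' i else ⊥) ⊔
            ((if t < r0 then a0 else ⊥) ⊓ (if p - t < 0 then c else ⊥))) ⊔
          (((if t < 0 then ac0 else ⊥) ⊓ ⨆ i, if p - t < rt i then at' i else ⊥) ⊔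
            ((if t < 0 then ac0 else ⊥) ⊓ (if p - t < 0 then c else ⊥))) := by
        refine iSup_congr fun t => ?_
        rw [inf_sup_right, inf_sup_left, inf_sup_left]
    _ = ((⨆ t : ℚ, (if t < r0 then a0 else ⊥) ⊓ ⨆ i, if p - t < rt i then at' i else ⊥) ⊔
          (⨆ t : ℚ, (if t < r0 then a0 else ⊥) ⊓ (if p - t < 0 then c else ⊥))) ⊔
        ((⨆ t : ℚ, (if t < 0 then ac0 else ⊥) ⊓ ⨆ i, if p - t < rt i then at' i else ⊥) ⊔
          (⨆ t : ℚ, (if t < 0 then ac0 else ⊥) ⊓ (if p - t < 0 then c else ⊥))) := by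
        rw [iSup_sup_eq, iSup_sup_eq, iSup_sup_eq]
    _ = ((if p < r0 then a0 else ⊥) ⊔ ⨆ i, if p < rt i then at' i else ⊥)
        ⊔ (if p < 0 then ac0 ⊓ c else ⊥) := by
        rw [P1, P2, P3, P4, bot_sup_eq, ← sup_assoc]

lemma add_v_calc {k : ℕ} (r0 : ℚ) (a0 ac0 c : L) (rt : Fin k → ℚ) (at' : Fin k → L)
    (h1 : ∀ i, a0 ⊓ at' i = ⊥) (h2 : a0 ⊓ c = a0) (h3 : ∀ i, ac0 ⊓ at' i = at' i) (q : ℚ) :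
    (⨆ t : ℚ, ((if r0 < t then a0 else ⊥) ⊔ (if 0 < t then ac0 else ⊥)) ⊓
        ((⨆ i, if rt i < q - t then at' i else ⊥) ⊔ (if 0 < q - t then c else ⊥)))
    = ((if r0 < q then a0 else ⊥) ⊔ ⨆ i, if rt i < q then at' i else ⊥)
        ⊔ (if 0 < q then ac0 ⊓ c else ⊥) := by
  have P1 : (⨆ t : ℚ, (if r0 < t then a0 else ⊥) ⊓ ⨆ i, if rt i < q - t then at' i else ⊥)
      = ⊥ := by
    have e : ∀ t : ℚ, (if r0 < t then a0 else ⊥) ⊓ (⨆ i, if rt i < q - t then at' i else ⊥)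
        = ⨆ i, (if r0 < t then a0 else ⊥) ⊓ (if rt i < q - t then at' i else ⊥) :=
      fun t => inf_iSup_eq _ _
    rw [iSup_congr e, iSup_comm]
    have e2 : ∀ i, (⨆ t : ℚ, (if r0 < t then a0 else ⊥) ⊓ (if rt i < q - t then at' i else ⊥))
        = ⊥ := fun i => by rw [key_v]; simp [h1 i]
    rw [iSup_congr e2]
    simp
  have P2 : (⨆ t : ℚ, (if r0 < t then a0 else ⊥) ⊓ (if 0 < q - t then c else ⊥))
      = if r0 < q then a0 else ⊥ := by
    rw [key_v, add_zero, h2]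
  have P3 : (⨆ t : ℚ, (if 0 < t then ac0 else ⊥) ⊓ ⨆ i, if rt i < q - t then at' i else ⊥)
      = ⨆ i, if rt i < q then at' i else ⊥ := by
    have e : ∀ t : ℚ, (if 0 < t then ac0 else ⊥) ⊓ (⨆ i, if rt i < q - t then at' i else ⊥)
        = ⨆ i, (if 0 < t then ac0 else ⊥) ⊓ (if rt i < q - t then at' i else ⊥) :=
      fun t => inf_iSup_eq _ _
    rw [iSup_congr e, iSup_comm]
    refine iSup_congr fun i => ?_
    rw [key_v, zero_add, h3 i]
  have P4 : (⨆ t : ℚ, (if 0 < t then ac0 else ⊥) ⊓ (if 0 < q - t then c else ⊥))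
      = if 0 < q then ac0 ⊓ c else ⊥ := by
    rw [key_v, add_zero]
  calc
    (⨆ t : ℚ, ((if r0 < t then a0 else ⊥) ⊔ (if 0 < t then ac0 else ⊥)) ⊓
        ((⨆ i, if rt i < q - t then at' i else ⊥) ⊔ (if 0 < q - t then c else ⊥)))
      = ⨆ t : ℚ,
          (((if r0 < t then a0 else ⊥) ⊓ ⨆ i, if rt i < q - t then at' i else ⊥) ⊔
            ((if r0 < t then a0 else ⊥) ⊓ (if 0 < q - t then c else ⊥))) ⊔
          (((if 0 < t then ac0 else ⊥) ⊓ ⨆ i, if rt i < q - t then at' i else ⊥) ⊔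
            ((if 0 < t then ac0 else ⊥) ⊓ (if 0 < q - t then c else ⊥))) := by
        refine iSup_congr fun t => ?_
        rw [inf_sup_right, inf_sup_left, inf_sup_left]
    _ = ((⨆ t : ℚ, (if r0 < t then a0 else ⊥) ⊓ ⨆ i, if rt i < q - t then at' i else ⊥) ⊔
          (⨆ t : ℚ, (if r0 < t then a0 else ⊥) ⊓ (if 0 < q - t then c else ⊥))) ⊔
        ((⨆ t : ℚ, (if 0 < t then ac0 else ⊥) ⊓ ⨆ i, if rt i < q - t then at' i else ⊥) ⊔
          (⨆ t : ℚ, (if 0 < t then ac0 else ⊥) ⊓ (if 0 < q - t then c else ⊥))) := by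
        rw [iSup_sup_eq, iSup_sup_eq, iSup_sup_eq]
    _ = ((if r0 < q then a0 else ⊥) ⊔ ⨆ i, if rt i < q then at' i else ⊥)
        ⊔ (if 0 < q then ac0 ⊓ c else ⊥) := by
        rw [P1, P2, P3, P4, bot_sup_eq, ← sup_assoc]

end
section
variable {L : Type*} [Order.Frame L]

lemma sum_u : ∀ {n : ℕ} (r : Fin n → ℚ) (a ac : Fin n → L),
    (∀ i, a i ⊔ ac i = ⊤) → (∀ i j, i ≠ j → a i ≤ ac j) → (∀ i j, i ≠ j → a i ⊓ a j = ⊥) →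
    ∀ p : ℚ, (sumMP (List.ofFn fun i => sChi (r i) (a i) (ac i))).u p
      = (⨆ i, if p < r i then a i else ⊥) ⊔ (if p < 0 then (⨅ i, ac i) else ⊥) := by
  intro n
  induction n with
  | zero =>
    intro r a ac hc hle hd p
    show (zeroMP L).u p = _
    simp only [zeroMP, iSup_of_empty, iInf_of_empty, bot_sup_eq]
  | succ k ih =>
    intro r a ac hc hle hd p
    cases k with
    | zero =>
      have hl : (List.ofFn fun i : Fin 1 => sChi (r i) (a i) (ac i))
          = [sChi (r 0) (a 0) (ac 0)] := by
        simp [List.ofFn_succ]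
      rw [hl]
      show (sChi (r 0) (a 0) (ac 0)).u p = _
      rw [sChi_u _ _ _ (hc 0)]
      congr 1
      · symm; rw [fin_iSup_succ]; simp
      · congr 1
        rw [fin_iInf_succ]; simp
    | succ m =>
      rw [List.ofFn_succ, sumMP_cons _ _ (by simp [List.ofFn_succ])]
      show (⨆ t : ℚ, (sChi (r 0) (a 0) (ac 0)).u t ⊓
          (sumMP (List.ofFn fun i : Fin (m+1) =>
            sChi (r i.succ) (a i.succ) (ac i.succ))).u (p - t)) = _
      have ecomp : ∀ t : ℚ, (sChi (r 0) (a 0) (ac 0)).u t ⊓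
          (sumMP (List.ofFn fun i : Fin (m+1) =>
            sChi (r i.succ) (a i.succ) (ac i.succ))).u (p - t)
          = ((if t < r 0 then a 0 else ⊥) ⊔ (if t < 0 then ac 0 else ⊥)) ⊓
            ((⨆ i : Fin (m+1), if p - t < r i.succ then a i.succ else ⊥) ⊔
              (if p - t < 0 then (⨅ i : Fin (m+1), ac i.succ) else ⊥)) := fun t => by
        rw [sChi_u _ _ _ (hc 0),
          ih (fun i => r i.succ) (fun i => a i.succ) (fun i => ac i.succ)
            (fun i => hc i.succ)
            (fun i j hij => hle i.succ j.succ (fun h => hij (Fin.succ_injective _ h)))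
            (fun i j hij => hd i.succ j.succ (fun h => hij (Fin.succ_injective _ h)))
            (p - t)]
      rw [iSup_congr ecomp,
        add_u_calc (r 0) (a 0) (ac 0) (⨅ i : Fin (m+1), ac i.succ)
          (fun i => r i.succ) (fun i => a i.succ)
          (fun i => hd 0 i.succ (Fin.succ_ne_zero i).symm)
          (inf_eq_left.mpr (le_iInf fun i => hle 0 i.succ (Fin.succ_ne_zero i).symm))
          (fun i => inf_eq_right.mpr (hle i.succ 0 (Fin.succ_ne_zero i))) p,
        fin_iSup_succ (fun i : Fin (m+1+1) => if p < r i then a i else ⊥),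
        fin_iInf_succ ac]

lemma sum_v : ∀ {n : ℕ} (r : Fin n → ℚ) (a ac : Fin n → L),
    (∀ i, a i ⊔ ac i = ⊤) → (∀ i j, i ≠ j → a i ≤ ac j) → (∀ i j, i ≠ j → a i ⊓ a j = ⊥) →
    ∀ q : ℚ, (sumMP (List.ofFn fun i => sChi (r i) (a i) (ac i))).v q
      = (⨆ i, if r i < q then a i else ⊥) ⊔ (if 0 < q then (⨅ i, ac i) else ⊥) := by
  intro n
  induction n with
  | zero =>
    intro r a ac hc hle hd q
    show (zeroMP L).v q = _
    simp only [zeroMP, iSup_of_empty, iInf_of_empty, bot_sup_eq]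
    split_ifs with h1 h2 <;> first | rfl | (exfalso; linarith)
  | succ k ih =>
    intro r a ac hc hle hd q
    cases k with
    | zero =>
      have hl : (List.ofFn fun i : Fin 1 => sChi (r i) (a i) (ac i))
          = [sChi (r 0) (a 0) (ac 0)] := by
        simp [List.ofFn_succ]
      rw [hl]
      show (sChi (r 0) (a 0) (ac 0)).v q = _
      rw [sChi_v _ _ _ (hc 0)]
      congr 1
      · symm; rw [fin_iSup_succ]; simp
      · congr 1
        rw [fin_iInf_succ]; simp
    | succ m =>
      rw [List.ofFn_succ, sumMP_cons _ _ (by simp [List.ofFn_succ])]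
      show (⨆ t : ℚ, (sChi (r 0) (a 0) (ac 0)).v t ⊓
          (sumMP (List.ofFn fun i : Fin (m+1) =>
            sChi (r i.succ) (a i.succ) (ac i.succ))).v (q - t)) = _
      have ecomp : ∀ t : ℚ, (sChi (r 0) (a 0) (ac 0)).v t ⊓
          (sumMP (List.ofFn fun i : Fin (m+1) =>
            sChi (r i.succ) (a i.succ) (ac i.succ))).v (q - t)
          = ((if r 0 < t then a 0 else ⊥) ⊔ (if 0 < t then ac 0 else ⊥)) ⊓
            ((⨆ i : Fin (m+1), if r i.succ < q - t then a i.succ else ⊥) ⊔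
              (if 0 < q - t then (⨅ i : Fin (m+1), ac i.succ) else ⊥)) := fun t => by
        rw [sChi_v _ _ _ (hc 0),
          ih (fun i => r i.succ) (fun i => a i.succ) (fun i => ac i.succ)
            (fun i => hc i.succ)
            (fun i j hij => hle i.succ j.succ (fun h => hij (Fin.succ_injective _ h)))
            (fun i j hij => hd i.succ j.succ (fun h => hij (Fin.succ_injective _ h)))
            (q - t)]
      rw [iSup_congr ecomp,
        add_v_calc (r 0) (a 0) (ac 0) (⨅ i : Fin (m+1), ac i.succ)
          (fun i => r i.succ) (fun i => a i.succ)
          (fun i => hd 0 i.succ (Fin.succ_ne_zero i).symm)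
          (inf_eq_left.mpr (le_iInf fun i => hle 0 i.succ (Fin.succ_ne_zero i).symm))
          (fun i => inf_eq_right.mpr (hle i.succ 0 (Fin.succ_ne_zero i))) q,
        fin_iSup_succ (fun i : Fin (m+1+1) => if r i < q then a i else ⊥),
        fin_iInf_succ ac]

end
section
variable {L : Type*} [Order.Frame L]

lemma UV_inf {n : ℕ} (r : Fin n → ℚ) (a : Fin n → L)
    (hd : ∀ i j, i ≠ j → a i ⊓ a j = ⊥) (p q : ℚ) :
    (⨆ i, if p < r i then a i else ⊥) ⊓ (⨆ j, if r j < q then a j else ⊥)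
      = ⨆ i, if p < r i ∧ r i < q then a i else ⊥ := by
  rw [iSup_inf_eq]
  refine le_antisymm (iSup_le fun i => ?_) (iSup_le fun i => ?_)
  · rw [inf_iSup_eq]
    refine iSup_le fun j => ?_
    by_cases hij : i = j
    · subst hij
      by_cases h1 : p < r i
      · by_cases h2 : r i < q
        · rw [if_pos h1, if_pos h2, inf_idem]
          exact le_iSup_of_le i (le_of_eq (if_pos (show p < r i ∧ r i < q from ⟨h1, h2⟩)).symm)
        · simp [h2]
      · simp [h1]
    · exact le_trans (le_trans (inf_le_inf chi_le chi_le) (le_of_eq (hd i j hij))) bot_le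
  · by_cases h : p < r i ∧ r i < q
    · rw [if_pos h]
      refine le_iSup_of_le i (le_inf (by rw [if_pos h.1]) (le_iSup_of_le i (by rw [if_pos h.2])))
    · simp [h]

lemma chi_eq_self {n : ℕ} (r : Fin n → ℚ) (hr : StrictMono r) (a : Fin n → L) (i : Fin n) :
    (⨆ i', if r i' = r i then a i' else ⊥) = a i := by
  refine le_antisymm (iSup_le fun i' => ?_) (le_iSup_of_le i (by simp))
  by_cases h : r i' = r i
  · rw [if_pos h, hr.injective h]
  · simp [h]

end

/-- Uniqueness of the canonical form of a simple function: if two canonical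
representations (strictly increasing rational coefficients, pairwise disjoint nonzero
complemented elements joining to `⊤`) define the same pair, then they coincide. -/
theorem canonical_form_unique {L : Type*} [Order.Frame L] (n m : ℕ)
    (r : Fin n → ℚ) (hr : StrictMono r)
    (a ac : Fin n → L) (ha : ∀ i, IsCompl (a i) (ac i))
    (hadisj : ∀ i j, i ≠ j → a i ⊓ a j = ⊥)
    (hane : ∀ i, a i ≠ ⊥) (hacov : (⨆ i, a i) = ⊤)
    (s : Fin m → ℚ) (hs : StrictMono s)
    (b bc : Fin m → L) (hb : ∀ j, IsCompl (b j) (bc j))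
    (hbdisj : ∀ i j, i ≠ j → b i ⊓ b j = ⊥)
    (hbne : ∀ j, b j ≠ ⊥) (hbcov : (⨆ j, b j) = ⊤)
    (heq : sumMP (List.ofFn fun i => sChi (r i) (a i) (ac i)) =
           sumMP (List.ofFn fun j => sChi (s j) (b j) (bc j))) :
    n = m ∧ ∀ (i : ℕ) (hin : i < n) (him : i < m),
      r ⟨i, hin⟩ = s ⟨i, him⟩ ∧ a ⟨i, hin⟩ = b ⟨i, him⟩ := by
  classical
  have hsupa : ∀ i, a i ⊔ ac i = ⊤ := fun i => (ha i).sup_eq_top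
  have hinfa : ∀ i, a i ⊓ ac i = ⊥ := fun i => (ha i).inf_eq_bot
  have hsupb : ∀ j, b j ⊔ bc j = ⊤ := fun j => (hb j).sup_eq_top
  have hinfb : ∀ j, b j ⊓ bc j = ⊥ := fun j => (hb j).inf_eq_bot
  have hlea : ∀ i j, i ≠ j → a i ≤ ac j := by
    intro i j hij
    calc a i = a i ⊓ (a j ⊔ ac j) := by rw [hsupa j, inf_top_eq]
      _ = (a i ⊓ a j) ⊔ (a i ⊓ ac j) := inf_sup_left _ _ _
      _ = a i ⊓ ac j := by rw [hadisj i j hij, bot_sup_eq]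
      _ ≤ ac j := inf_le_right
  have hleb : ∀ i j, i ≠ j → b i ≤ bc j := by
    intro i j hij
    calc b i = b i ⊓ (b j ⊔ bc j) := by rw [hsupb j, inf_top_eq]
      _ = (b i ⊓ b j) ⊔ (b i ⊓ bc j) := inf_sup_left _ _ _
      _ = b i ⊓ bc j := by rw [hbdisj i j hij, bot_sup_eq]
      _ ≤ bc j := inf_le_right
  have hbota : (⨅ i, ac i) = ⊥ := by
    have h1 : (⨅ i, ac i) = (⨅ i, ac i) ⊓ ⨆ j, a j := by rw [hacov, inf_top_eq]
    rw [h1, inf_iSup_eq]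
    refine le_bot_iff.mp (iSup_le fun j => ?_)
    calc (⨅ i, ac i) ⊓ a j ≤ ac j ⊓ a j := inf_le_inf_right _ (iInf_le _ j)
      _ = ⊥ := by rw [inf_comm, hinfa j]
  have hbotb : (⨅ j, bc j) = ⊥ := by
    have h1 : (⨅ j, bc j) = (⨅ j, bc j) ⊓ ⨆ i, b i := by rw [hbcov, inf_top_eq]
    rw [h1, inf_iSup_eq]
    refine le_bot_iff.mp (iSup_le fun j => ?_)
    calc (⨅ i, bc i) ⊓ b j ≤ bc j ⊓ b j := inf_le_inf_right _ (iInf_le _ j)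
      _ = ⊥ := by rw [inf_comm, hinfb j]
  have hU : ∀ p : ℚ, (⨆ i, if p < r i then a i else ⊥) = ⨆ j, if p < s j then b j else ⊥ := by
    intro p
    have h1 : (sumMP (List.ofFn fun i => sChi (r i) (a i) (ac i))).u p
        = (sumMP (List.ofFn fun j => sChi (s j) (b j) (bc j))).u p := by rw [heq]
    rw [sum_u r a ac hsupa hlea hadisj p, sum_u s b bc hsupb hleb hbdisj p,
      hbota, hbotb, ite_self, sup_bot_eq, sup_bot_eq] at h1
    exact h1
  have hV : ∀ q : ℚ, (⨆ i, if r i < q then a i else ⊥) = ⨆ j, if s j < q then b j else ⊥ := by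
    intro q
    have h1 : (sumMP (List.ofFn fun i => sChi (r i) (a i) (ac i))).v q
        = (sumMP (List.ofFn fun j => sChi (s j) (b j) (bc j))).v q := by rw [heq]
    rw [sum_v r a ac hsupa hlea hadisj q, sum_v s b bc hsupb hleb hbdisj q,
      hbota, hbotb, ite_self, sup_bot_eq, sup_bot_eq] at h1
    exact h1
  have key : ∀ t : ℚ, (⨆ i, if r i = t then a i else ⊥) = ⨆ j, if s j = t then b j else ⊥ := by
    intro t
    set T : Finset ℚ := Finset.image r Finset.univ ∪ Finset.image s Finset.univ with hT
    have hpex : ∃ p : ℚ, p < t ∧ ∀ x ∈ T, x < t → x ≤ p := by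
      set P : Finset ℚ := insert (t-1) (T.filter (· < t)) with hPdef
      have hPne : P.Nonempty := ⟨t-1, Finset.mem_insert_self _ _⟩
      refine ⟨P.max' hPne, ?_, ?_⟩
      · rcases Finset.mem_insert.mp (P.max'_mem hPne) with h | h
        · rw [h]; linarith
        · exact (Finset.mem_filter.mp h).2
      · intro x hx hxt
        have hxP : x ∈ P := Finset.mem_insert_of_mem (Finset.mem_filter.mpr ⟨hx, hxt⟩)
        exact P.le_max' x hxP
    have hqex : ∃ q : ℚ, t < q ∧ ∀ x ∈ T, t < x → q ≤ x := by
      set Q : Finset ℚ := insert (t+1) (T.filter (t < ·)) with hQdef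
      have hQne : Q.Nonempty := ⟨t+1, Finset.mem_insert_self _ _⟩
      refine ⟨Q.min' hQne, ?_, ?_⟩
      · rcases Finset.mem_insert.mp (Q.min'_mem hQne) with h | h
        · rw [h]; linarith
        · exact (Finset.mem_filter.mp h).2
      · intro x hx htx
        have hxQ : x ∈ Q := Finset.mem_insert_of_mem (Finset.mem_filter.mpr ⟨hx, htx⟩)
        exact Q.min'_le x hxQ
    obtain ⟨p, hpt, hp⟩ := hpex
    obtain ⟨q, htq, hq⟩ := hqex
    have hmemr : ∀ i, r i ∈ T :=
      fun i => Finset.mem_union_left _ (Finset.mem_image_of_mem r (Finset.mem_univ i))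
    have hmems : ∀ j, s j ∈ T :=
      fun j => Finset.mem_union_right _ (Finset.mem_image_of_mem s (Finset.mem_univ j))
    have ea : (⨆ i, if p < r i ∧ r i < q then a i else ⊥)
        = ⨆ i, if r i = t then a i else ⊥ := by
      refine iSup_congr fun i => ?_
      by_cases h : r i = t
      · rw [if_pos (show p < r i ∧ r i < q from ⟨by rw [h]; exact hpt, by rw [h]; exact htq⟩),
          if_pos h]
      · have hcond : ¬(p < r i ∧ r i < q) := by
          rintro ⟨hh1, hh2⟩
          rcases lt_or_gt_of_ne h with hlt | hgt
          · exact absurd hh1 (not_lt.mpr (hp _ (hmemr i) hlt))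
          · exact absurd hh2 (not_lt.mpr (hq _ (hmemr i) hgt))
        rw [if_neg hcond, if_neg h]
    have eb : (⨆ j, if p < s j ∧ s j < q then b j else ⊥)
        = ⨆ j, if s j = t then b j else ⊥ := by
      refine iSup_congr fun j => ?_
      by_cases h : s j = t
      · rw [if_pos (show p < s j ∧ s j < q from ⟨by rw [h]; exact hpt, by rw [h]; exact htq⟩),
          if_pos h]
      · have hcond : ¬(p < s j ∧ s j < q) := by
          rintro ⟨hh1, hh2⟩
          rcases lt_or_gt_of_ne h with hlt | hgt
          · exact absurd hh1 (not_lt.mpr (hp _ (hmems j) hlt))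
          · exact absurd hh2 (not_lt.mpr (hq _ (hmems j) hgt))
        rw [if_neg hcond, if_neg h]
    calc (⨆ i, if r i = t then a i else ⊥)
        = (⨆ i, if p < r i then a i else ⊥) ⊓ (⨆ i, if r i < q then a i else ⊥) := by
          rw [UV_inf r a hadisj, ea]
      _ = (⨆ j, if p < s j then b j else ⊥) ⊓ (⨆ j, if s j < q then b j else ⊥) := by
          rw [hU p, hV q]
      _ = ⨆ j, if s j = t then b j else ⊥ := by
          rw [UV_inf s b hbdisj, eb]
  have hTeq : Finset.image r Finset.univ = Finset.image s Finset.univ := by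
    ext t
    simp only [Finset.mem_image, Finset.mem_univ, true_and]
    constructor
    · rintro ⟨i, rfl⟩
      by_contra hcon
      push_neg at hcon
      have hbB : (⨆ j, if s j = r i then b j else ⊥) = ⊥ :=
        le_bot_iff.mp (iSup_le fun j => by rw [if_neg (hcon j)])
      exact hane i ((chi_eq_self r hr a i).symm.trans ((key (r i)).trans hbB))
    · rintro ⟨j, rfl⟩
      by_contra hcon
      push_neg at hcon
      have haA : (⨆ i, if r i = s j then a i else ⊥) = ⊥ :=
        le_bot_iff.mp (iSup_le fun i => by rw [if_neg (hcon i)])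
      exact hbne j ((chi_eq_self s hs b j).symm.trans ((key (s j)).symm.trans haA))
  have hcardr : (Finset.image r Finset.univ).card = n := by
    rw [Finset.card_image_of_injective _ hr.injective, Finset.card_univ, Fintype.card_fin]
  have hcards : (Finset.image s Finset.univ).card = m := by
    rw [Finset.card_image_of_injective _ hs.injective, Finset.card_univ, Fintype.card_fin]
  have hnm : n = m := by rw [← hcardr, hTeq, hcards]
  subst hnm
  have hre : r = (Finset.image r Finset.univ).orderEmbOfFin hcardr :=
    Finset.orderEmbOfFin_unique hcardr
      (fun x => Finset.mem_image_of_mem r (Finset.mem_univ x)) hr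
  have hse : s = (Finset.image r Finset.univ).orderEmbOfFin hcardr :=
    Finset.orderEmbOfFin_unique hcardr
      (fun x => by rw [hTeq]; exact Finset.mem_image_of_mem s (Finset.mem_univ x)) hs
  have hrs : r = s := hre.trans hse.symm
  refine ⟨rfl, fun i hin him => ⟨by rw [hrs], ?_⟩⟩
  have h1 : a ⟨i, hin⟩ = ⨆ j, if s j = r ⟨i, hin⟩ then b j else ⊥ :=
    (chi_eq_self r hr a _).symm.trans (key _)
  rw [h1, hrs]
  exact chi_eq_self s hs b _
end

section
/- Let C be a coframe, μ a measure on C, r_1, …, r_n nonnegative rationals, and A_1, …, A_n pairwise disjoint complemented elements of C. Then the indefinite integral η : C → [0,∞], η(S) := Σ_{i=1}^{n} r_i · μ(A_i ⊓ S), is itself a measure on C: η ⊥ = 0; η is monotone; η(S) + η(T) = η(S ⊔ T) + η(S ⊓ T) for all S, T; and η(⨆_{k} B_k) = ⨆_{k} η(B_k) for every increasing sequence (B_k)_{k∈ℕ} in C. -/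
open scoped ENNReal

/-- Complemented elements distribute over countable suprema in a coframe. -/
lemma compl_inf_iSup {C : Type*} [Order.Coframe C] {a ac : C} (h : IsCompl a ac)
    (B : ℕ → C) : a ⊓ ⨆ k, B k = ⨆ k, a ⊓ B k := by
  apply le_antisymm
  · have h1 : ∀ k, B k ≤ (⨆ j, a ⊓ B j) ⊔ ac := fun k => by
      calc B k = B k ⊓ (a ⊔ ac) := by rw [h.sup_eq_top, inf_top_eq]
      _ = (B k ⊓ a) ⊔ (B k ⊓ ac) := inf_sup_left _ _ _
      _ ≤ (⨆ j, a ⊓ B j) ⊔ ac :=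
          sup_le_sup (by rw [inf_comm]; exact le_iSup (fun j => a ⊓ B j) k) inf_le_right
    calc a ⊓ ⨆ k, B k ≤ a ⊓ ((⨆ j, a ⊓ B j) ⊔ ac) :=
          inf_le_inf_left _ (iSup_le h1)
    _ = (a ⊓ ⨆ j, a ⊓ B j) ⊔ (a ⊓ ac) := inf_sup_left _ _ _
    _ ≤ ⨆ j, a ⊓ B j := by rw [h.inf_eq_bot, sup_bot_eq]; exact inf_le_right
  · exact iSup_le fun k => inf_le_inf_left _ (le_iSup B k)

/-- The indefinite integral of a nonnegative simple function is a measure on the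
coframe `C`: `η S = Σ_i r_i · μ (A_i ⊓ S)` satisfies (M1) `η ⊥ = 0`, (M2) monotonicity,
(M3) modularity, and (M4) σ-continuity on increasing sequences. -/
theorem indefinite_integral_is_measure {C : Type*} [Order.Coframe C]
    (μ : C → ℝ≥0∞) (hbot : μ ⊥ = 0) (hmono : Monotone μ)
    (hmod : ∀ x y : C, μ x + μ y = μ (x ⊔ y) + μ (x ⊓ y))
    (hcont : ∀ x : ℕ → C, Monotone x → μ (⨆ i, x i) = ⨆ i, μ (x i))
    (n : ℕ) (r : Fin n → ℚ) (hr : ∀ i, 0 ≤ r i)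
    (A Ac : Fin n → C) (hA : ∀ i, IsCompl (A i) (Ac i))
    (hdisj : ∀ i j, i ≠ j → A i ⊓ A j = ⊥)
    (η : C → ℝ≥0∞) (hη : η = fun S => ∑ i, ENNReal.ofReal (r i) * μ (A i ⊓ S)) :
    η ⊥ = 0 ∧ Monotone η ∧
    (∀ S T : C, η S + η T = η (S ⊔ T) + η (S ⊓ T)) ∧
    (∀ B : ℕ → C, Monotone B → η (⨆ k, B k) = ⨆ k, η (B k)) := by
  subst hη
  refine ⟨?_, ?_, ?_, ?_⟩
  · simp [hbot]
  · intro S T hST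
    exact Finset.sum_le_sum fun i _ =>
      mul_le_mul_right (hmono (inf_le_inf_left _ hST)) _
  · intro S T
    rw [← Finset.sum_add_distrib, ← Finset.sum_add_distrib]
    refine Finset.sum_congr rfl fun i _ => ?_
    rw [← mul_add, ← mul_add]
    congr 1
    rw [hmod]
    congr 1
    · rw [inf_sup_left]
    · rw [inf_inf_inf_comm, inf_idem]
  · intro B hB
    calc (∑ i, ENNReal.ofReal (r i) * μ (A i ⊓ ⨆ k, B k))
        = ∑ i, ⨆ k, ENNReal.ofReal (r i) * μ (A i ⊓ B k) := by
          refine Finset.sum_congr rfl fun i _ => ?_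
          rw [compl_inf_iSup (hA i), hcont _ (fun a b hab =>
            inf_le_inf_left _ (hB hab)), ENNReal.mul_iSup]
      _ = ⨆ k, ∑ i, ENNReal.ofReal (r i) * μ (A i ⊓ B k) := by
          refine ENNReal.finsetSum_iSup_of_monotone fun i a b hab => ?_
          exact mul_le_mul_right (hmono (inf_le_inf_left _ (hB hab))) _
end
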